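/- Let f : X × Y → {0,1} be a Boolean function on finite nonempty sets X, Y, let ε ≥ 0 and δ > 0 satisfy ε + δ < 1/2, and set n_A = log₂|X|, n_B = log₂|Y|. For every shared-randomness SMP protocol Π computing f with worst-case error at most ε, there exists a private-coin SMP protocol Π′ computing f with worst-case error at most ε + δ and with CC_priv(Π′) ≤ CC_sh(Π) + g₂(n_A, n_B, δ), where g₂(x,y,z) = 2·log₂(2(x+y)/(z²·log₂ e) + 1) + 2. In particular CC_priv(f, ε+δ) ≤ CC_sh(f, ε) + g₂(n_A, n_B, δ). -/

import Mathlib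

open scoped BigOperators
open scoped Classical

noncomputable section

/-- A probability distribution on a finite type. -/
structure FinDist (Ω : Type) [Fintype Ω] where
  prob : Ω → ℝ
  nonneg : ∀ ω, 0 ≤ prob ω
  sum_one : ∑ ω, prob ω = 1

namespace FinDist

variable {Ω Ω' : Type} [Fintype Ω] [Fintype Ω']

/-- Product of two distributions (independent draw). -/
def prod (p : FinDist Ω) (q : FinDist Ω') : FinDist (Ω × Ω') where
  prob := fun ω => p.prob ω.1 * q.prob ω.2
  nonneg := fun ω => mul_nonneg (p.nonneg _) (q.nonneg _)
  sum_one := by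
    rw [Fintype.sum_prod_type]
    have h : ∀ a : Ω, ∑ b : Ω', p.prob a * q.prob b = p.prob a := by
      intro a; rw [← Finset.mul_sum, q.sum_one, mul_one]
    simp_rw [h]
    exact p.sum_one

/-- Probability of an event. -/
def probEvent (p : FinDist Ω) (E : Ω → Prop) : ℝ :=
  ∑ ω, if E ω then p.prob ω else 0

/-- Probability that a random variable takes a given value. -/
def probVal {α : Type*} (p : FinDist Ω) (A : Ω → α) (a : α) : ℝ :=
  probEvent p (fun ω => A ω = a)

/-- Shannon entropy (in bits) of a random variable on a finite probability space. -/
def entropy {α : Type*} (p : FinDist Ω) (A : Ω → α) : ℝ :=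
  ∑ a ∈ Finset.univ.image A, -(probVal p A a * Real.logb 2 (probVal p A a))

/-- Mutual information (in bits) I(A;B). -/
def mutualInfo {α β : Type*} (p : FinDist Ω) (A : Ω → α) (B : Ω → β) : ℝ :=
  entropy p A + entropy p B - entropy p (fun ω => (A ω, B ω))

/-- Conditional mutual information (in bits) I(A;B|C). -/
def condMutualInfo {α β γ : Type*} (p : FinDist Ω) (A : Ω → α) (B : Ω → β) (C : Ω → γ) : ℝ :=
  entropy p (fun ω => (A ω, C ω)) + entropy p (fun ω => (B ω, C ω))
    - entropy p (fun ω => (A ω, B ω, C ω)) - entropy p C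

/-- Independence of two random variables. -/
def Indep {α β : Type*} (p : FinDist Ω) (A : Ω → α) (B : Ω → β) : Prop :=
  ∀ a b, probEvent p (fun ω => A ω = a ∧ B ω = b) = probVal p A a * probVal p B b

end FinDist

/-- log₂(e). -/
def log2e : ℝ := Real.logb 2 (Real.exp 1)

def g1 (x : ℝ) : ℝ := 2 * Real.logb 2 (x + 1) + 10

def g2 (x y z : ℝ) : ℝ := 2 * Real.logb 2 (2 * (x + y) / (z ^ 2 * log2e) + 1) + 2

def g3 (x : ℝ) : ℝ := 2 * (1 / 2 - x) ^ 2 * log2e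

/-- A private-coin SMP protocol for computing functions f : X × Y → Z. -/
structure PrivSMP (X Y Z : Type) [Fintype X] [Fintype Y] [Fintype Z] where
  MA : Type
  MB : Type
  RA : Type
  RB : Type
  RC : Type
  [fMA : Fintype MA]
  [fMB : Fintype MB]
  [fRA : Fintype RA]
  [fRB : Fintype RB]
  [fRC : Fintype RC]
  [neMA : Nonempty MA]
  [neMB : Nonempty MB]
  [neRA : Nonempty RA]
  [neRB : Nonempty RB]
  [neRC : Nonempty RC]
  dRA : FinDist RA
  dRB : FinDist RB
  dRC : FinDist RC
  pA : X → RA → MA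
  pB : Y → RB → MB
  pC : MA → MB → RC → Z

attribute [instance] PrivSMP.fMA PrivSMP.fMB PrivSMP.fRA PrivSMP.fRB PrivSMP.fRC
attribute [instance] PrivSMP.neMA PrivSMP.neMB PrivSMP.neRA PrivSMP.neRB PrivSMP.neRC

namespace PrivSMP

variable {X Y Z : Type} [Fintype X] [Fintype Y] [Fintype Z]

/-- Joint distribution of all the (independent) randomness of the protocol,
ordered as (r_A, r_B, r_C). -/
def randDist (P : PrivSMP X Y Z) : FinDist (P.RA × P.RB × P.RC) :=
  P.dRA.prod (P.dRB.prod P.dRC)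

/-- Probability of error on input (x, y). -/
def err (P : PrivSMP X Y Z) (f : X → Y → Z) (x : X) (y : Y) : ℝ :=
  FinDist.probEvent P.randDist (fun r => P.pC (P.pA x r.1) (P.pB y r.2.1) r.2.2 ≠ f x y)

/-- The protocol computes f with worst-case error at most ε. -/
def Computes (P : PrivSMP X Y Z) (f : X → Y → Z) (ε : ℝ) : Prop :=
  ∀ x y, P.err f x y ≤ ε

/-- Communication cost ⌈log₂|M_A|⌉ + ⌈log₂|M_B|⌉. -/
def CC (P : PrivSMP X Y Z) : ℝ :=
  (⌈Real.logb 2 (Fintype.card P.MA)⌉ : ℝ) + (⌈Real.logb 2 (Fintype.card P.MB)⌉ : ℝ)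

end PrivSMP

/-- Private-coin communication complexity of f with error ε. -/
def CCprivf {X Y Z : Type} [Fintype X] [Fintype Y] [Fintype Z]
    (f : X → Y → Z) (ε : ℝ) : ℝ :=
  sInf {c : ℝ | ∃ P : PrivSMP X Y Z, P.Computes f ε ∧ P.CC = c}

/-- A shared-randomness SMP protocol for computing functions f : X × Y → Z. -/
structure ShSMP (X Y Z : Type) [Fintype X] [Fintype Y] [Fintype Z] where
  MA : Type
  MB : Type
  RA : Type
  RB : Type
  RC : Type
  RAC : Type
  RBC : Type
  [fMA : Fintype MA]
  [fMB : Fintype MB]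
  [fRA : Fintype RA]
  [fRB : Fintype RB]
  [fRC : Fintype RC]
  [fRAC : Fintype RAC]
  [fRBC : Fintype RBC]
  [neMA : Nonempty MA]
  [neMB : Nonempty MB]
  [neRA : Nonempty RA]
  [neRB : Nonempty RB]
  [neRC : Nonempty RC]
  [neRAC : Nonempty RAC]
  [neRBC : Nonempty RBC]
  dRA : FinDist RA
  dRB : FinDist RB
  dRC : FinDist RC
  dRAC : FinDist RAC
  dRBC : FinDist RBC
  pA : X → RA → RAC → MA
  pB : Y → RB → RBC → MB
  pC : MA → MB → RC → RAC → RBC → Z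

attribute [instance] ShSMP.fMA ShSMP.fMB ShSMP.fRA ShSMP.fRB ShSMP.fRC ShSMP.fRAC ShSMP.fRBC
attribute [instance] ShSMP.neMA ShSMP.neMB ShSMP.neRA ShSMP.neRB ShSMP.neRC ShSMP.neRAC
  ShSMP.neRBC

namespace ShSMP

variable {X Y Z : Type} [Fintype X] [Fintype Y] [Fintype Z]

/-- Joint distribution of all the (independent) randomness of the protocol,
ordered as (r_A, r_B, r_C, r_AC, r_BC). -/
def randDist (P : ShSMP X Y Z) : FinDist (P.RA × P.RB × P.RC × P.RAC × P.RBC) :=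
  P.dRA.prod (P.dRB.prod (P.dRC.prod (P.dRAC.prod P.dRBC)))

/-- Probability of error on input (x, y). -/
def err (P : ShSMP X Y Z) (f : X → Y → Z) (x : X) (y : Y) : ℝ :=
  FinDist.probEvent P.randDist
    (fun r => P.pC (P.pA x r.1 r.2.2.2.1) (P.pB y r.2.1 r.2.2.2.2) r.2.2.1 r.2.2.2.1 r.2.2.2.2
      ≠ f x y)

/-- The protocol computes f with worst-case error at most ε. -/
def Computes (P : ShSMP X Y Z) (f : X → Y → Z) (ε : ℝ) : Prop :=
  ∀ x y, P.err f x y ≤ ε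

/-- Communication cost ⌈log₂|M_A|⌉ + ⌈log₂|M_B|⌉. -/
def CC (P : ShSMP X Y Z) : ℝ :=
  (⌈Real.logb 2 (Fintype.card P.MA)⌉ : ℝ) + (⌈Real.logb 2 (Fintype.card P.MB)⌉ : ℝ)

/-- The underlying probability space when the input pair is drawn from μ, independently
of all the randomness of the protocol. A sample point is
((x, y), (r_A, r_B, r_C, r_AC, r_BC)). -/
def space (P : ShSMP X Y Z) (μ : FinDist (X × Y)) :
    FinDist ((X × Y) × (P.RA × P.RB × P.RC × P.RAC × P.RBC)) :=
  μ.prod P.randDist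

/-- Alice's message as a random variable. -/
def rvMA (P : ShSMP X Y Z) (ω : (X × Y) × (P.RA × P.RB × P.RC × P.RAC × P.RBC)) : P.MA :=
  P.pA ω.1.1 ω.2.1 ω.2.2.2.2.1

/-- Bob's message as a random variable. -/
def rvMB (P : ShSMP X Y Z) (ω : (X × Y) × (P.RA × P.RB × P.RC × P.RAC × P.RBC)) : P.MB :=
  P.pB ω.1.2 ω.2.2.1 ω.2.2.2.2.2

/-- The referee's private randomness as a random variable. -/
def rvRC (P : ShSMP X Y Z) (ω : (X × Y) × (P.RA × P.RB × P.RC × P.RAC × P.RBC)) : P.RC :=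
  ω.2.2.2.1

/-- The Alice–referee shared randomness as a random variable. -/
def rvRAC (P : ShSMP X Y Z) (ω : (X × Y) × (P.RA × P.RB × P.RC × P.RAC × P.RBC)) : P.RAC :=
  ω.2.2.2.2.1

/-- The Bob–referee shared randomness as a random variable. -/
def rvRBC (P : ShSMP X Y Z) (ω : (X × Y) × (P.RA × P.RB × P.RC × P.RAC × P.RBC)) : P.RBC :=
  ω.2.2.2.2.2

/-- Information leakage of the protocol on input distribution μ :
IL(Π,μ) = I(XY ; M_A M_B R_C R_AC R_BC). -/
def IL (P : ShSMP X Y Z) (μ : FinDist (X × Y)) : ℝ :=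
  FinDist.mutualInfo (P.space μ) (fun ω => ω.1)
    (fun ω => (P.rvMA ω, P.rvMB ω, P.rvRC ω, P.rvRAC ω, P.rvRBC ω))

/-- Worst-case (over input distributions) information leakage IL(Π). -/
def ILmax (P : ShSMP X Y Z) : ℝ :=
  ⨆ μ : FinDist (X × Y), P.IL μ

/-- Information complexity of the protocol on input distribution μ :
IC(Π,μ) = I(X ; M_A | R_AC) + I(Y ; M_B | R_BC). -/
def IC (P : ShSMP X Y Z) (μ : FinDist (X × Y)) : ℝ :=
  FinDist.condMutualInfo (P.space μ) (fun ω => ω.1.1) (fun ω => P.rvMA ω) (fun ω => P.rvRAC ω)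
    + FinDist.condMutualInfo (P.space μ) (fun ω => ω.1.2) (fun ω => P.rvMB ω)
      (fun ω => P.rvRBC ω)

/-- Worst-case (over input distributions) information complexity IC(Π). -/
def ICmax (P : ShSMP X Y Z) : ℝ :=
  ⨆ μ : FinDist (X × Y), P.IC μ

end ShSMP

/-- Shared-randomness communication complexity of f with error ε. -/
def CCshf {X Y Z : Type} [Fintype X] [Fintype Y] [Fintype Z]
    (f : X → Y → Z) (ε : ℝ) : ℝ :=
  sInf {c : ℝ | ∃ P : ShSMP X Y Z, P.Computes f ε ∧ P.CC = c}

/-- Information leakage for computing f with error ε. -/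
def ILf {X Y Z : Type} [Fintype X] [Fintype Y] [Fintype Z]
    (f : X → Y → Z) (ε : ℝ) : ℝ :=
  sInf {c : ℝ | ∃ P : ShSMP X Y Z, P.Computes f ε ∧ P.ILmax = c}

/-- Information complexity for computing f with error ε. -/
def ICf {X Y Z : Type} [Fintype X] [Fintype Y] [Fintype Z]
    (f : X → Y → Z) (ε : ℝ) : ℝ :=
  sInf {c : ℝ | ∃ P : ShSMP X Y Z, P.Computes f ε ∧ P.ICmax = c}

/-- An average-length SMP protocol: a shared-randomness SMP protocol whose (countable)
message sets carry length functions satisfying Kraft's inequality. -/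
structure AvgSMP (X Y Z : Type) [Fintype X] [Fintype Y] [Fintype Z] where
  MA : Type
  MB : Type
  RA : Type
  RB : Type
  RC : Type
  RAC : Type
  RBC : Type
  [cMA : Countable MA]
  [cMB : Countable MB]
  [neMA : Nonempty MA]
  [neMB : Nonempty MB]
  [fRA : Fintype RA]
  [fRB : Fintype RB]
  [fRC : Fintype RC]
  [fRAC : Fintype RAC]
  [fRBC : Fintype RBC]
  [neRA : Nonempty RA]
  [neRB : Nonempty RB]
  [neRC : Nonempty RC]
  [neRAC : Nonempty RAC]
  [neRBC : Nonempty RBC]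
  lA : MA → ℕ
  lB : MB → ℕ
  kraftA : ∑' m : MA, ((2 : ℝ) ^ lA m)⁻¹ ≤ 1
  kraftB : ∑' m : MB, ((2 : ℝ) ^ lB m)⁻¹ ≤ 1
  dRA : FinDist RA
  dRB : FinDist RB
  dRC : FinDist RC
  dRAC : FinDist RAC
  dRBC : FinDist RBC
  pA : X → RA → RAC → MA
  pB : Y → RB → RBC → MB
  pC : MA → MB → RC → RAC → RBC → Z

attribute [instance] AvgSMP.cMA AvgSMP.cMB AvgSMP.neMA AvgSMP.neMB
attribute [instance] AvgSMP.fRA AvgSMP.fRB AvgSMP.fRC AvgSMP.fRAC AvgSMP.fRBC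
attribute [instance] AvgSMP.neRA AvgSMP.neRB AvgSMP.neRC AvgSMP.neRAC AvgSMP.neRBC

namespace AvgSMP

variable {X Y Z : Type} [Fintype X] [Fintype Y] [Fintype Z]

/-- Joint distribution of all the (independent) randomness of the protocol,
ordered as (r_A, r_B, r_C, r_AC, r_BC). -/
def randDist (P : AvgSMP X Y Z) : FinDist (P.RA × P.RB × P.RC × P.RAC × P.RBC) :=
  P.dRA.prod (P.dRB.prod (P.dRC.prod (P.dRAC.prod P.dRBC)))

/-- Probability of error on input (x, y). -/
def err (P : AvgSMP X Y Z) (f : X → Y → Z) (x : X) (y : Y) : ℝ :=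
  FinDist.probEvent P.randDist
    (fun r => P.pC (P.pA x r.1 r.2.2.2.1) (P.pB y r.2.1 r.2.2.2.2) r.2.2.1 r.2.2.2.1 r.2.2.2.2
      ≠ f x y)

/-- The protocol computes f with worst-case error at most ε. -/
def Computes (P : AvgSMP X Y Z) (f : X → Y → Z) (ε : ℝ) : Prop :=
  ∀ x y, P.err f x y ≤ ε

/-- Average communication cost on input (x, y): E[ℓ_A(M_A) + ℓ_B(M_B)]. -/
def CCavOn (P : AvgSMP X Y Z) (x : X) (y : Y) : ℝ :=
  ∑ r : P.RA × P.RB × P.RC × P.RAC × P.RBC, P.randDist.prob r *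
    ((P.lA (P.pA x r.1 r.2.2.2.1) : ℝ) + (P.lB (P.pB y r.2.1 r.2.2.2.2) : ℝ))

/-- Average communication cost of the protocol (worst case over inputs). -/
def CCav (P : AvgSMP X Y Z) : ℝ :=
  ⨆ xy : X × Y, P.CCavOn xy.1 xy.2

/-- The underlying probability space when the input pair is drawn from μ. -/
def space (P : AvgSMP X Y Z) (μ : FinDist (X × Y)) :
    FinDist ((X × Y) × (P.RA × P.RB × P.RC × P.RAC × P.RBC)) :=
  μ.prod P.randDist

/-- Information complexity of the protocol on input distribution μ :
IC(Π,μ) = I(X ; M_A | R_AC) + I(Y ; M_B | R_BC). -/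
def IC (P : AvgSMP X Y Z) (μ : FinDist (X × Y)) : ℝ :=
  FinDist.condMutualInfo (P.space μ) (fun ω => ω.1.1)
      (fun ω => P.pA ω.1.1 ω.2.1 ω.2.2.2.2.1) (fun ω => ω.2.2.2.2.1)
    + FinDist.condMutualInfo (P.space μ) (fun ω => ω.1.2)
      (fun ω => P.pB ω.1.2 ω.2.2.1 ω.2.2.2.2.2) (fun ω => ω.2.2.2.2.2)

/-- Worst-case (over input distributions) information complexity. -/
def ICmax (P : AvgSMP X Y Z) : ℝ :=
  ⨆ μ : FinDist (X × Y), P.IC μ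

end AvgSMP

/-- Average-length communication complexity of f with error ε. -/
def CCavf {X Y Z : Type} [Fintype X] [Fintype Y] [Fintype Z]
    (f : X → Y → Z) (ε : ℝ) : ℝ :=
  sInf {c : ℝ | ∃ P : AvgSMP X Y Z, P.Computes f ε ∧ P.CCav = c}

/-- The equality function on n-bit strings. -/
def EQfun (n : ℕ) : (Fin n → Bool) → (Fin n → Bool) → Bool :=
  fun x y => decide (x = y)

end


/-!
Newman's argument, applied once on each side. Once the strings shared by the referee with
Alice and with Bob are fixed to `(a, b)`, the error on input `(x, y)` is a number
`e(x, y, a, b) ∈ [0, 1]` whose average over `(a, b)` is at most `ε`. By Hoeffding's inequality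
and a union bound over the `|X| |Y|` inputs, `t > 2 ln (|X| |Y|) / δ²` independent samples
`u₁, …, u_t` of `a` satisfy `(1/t) ∑ᵢ E_b e(x, y, uᵢ, b) ≤ ε + δ/2` for every input at once, and
samples `v₁, …, v_t` of `b` then give `(1/t²) ∑ᵢⱼ e(x, y, uᵢ, vⱼ) ≤ ε + δ`. In the private-coin
protocol Alice and Bob draw indices `i`, `j` uniformly, play with the shared strings `uᵢ`, `vⱼ`
and append their index to their message; for `t` a power of two this costs `2 log₂ t ≤ g₂` bits.
-/

open Real

namespace FinDist

variable {Ω Ω' A : Type} [Fintype Ω] [Fintype Ω'] [Fintype A]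

def expect (p : FinDist Ω) (g : Ω → ℝ) : ℝ :=
  ∑ ω, p.prob ω * g ω

lemma probEvent_eq_expect (p : FinDist Ω) (E : Ω → Prop) :
    p.probEvent E = p.expect fun ω => if E ω then 1 else 0 := by
  simp only [probEvent, expect, mul_ite, mul_one, mul_zero]

lemma expect_mono (p : FinDist Ω) {g g' : Ω → ℝ} (h : ∀ ω, g ω ≤ g' ω) :
    p.expect g ≤ p.expect g' :=
  Finset.sum_le_sum fun ω _ => mul_le_mul_of_nonneg_left (h ω) (p.nonneg ω)

lemma expect_const (p : FinDist Ω) (c : ℝ) : p.expect (fun _ => c) = c := by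
  rw [expect, ← Finset.sum_mul, p.sum_one, one_mul]

lemma expect_const_mul (p : FinDist Ω) (c : ℝ) (g : Ω → ℝ) :
    (p.expect fun ω => c * g ω) = c * p.expect g := by
  simp only [expect, Finset.mul_sum]
  exact Finset.sum_congr rfl fun _ _ => by ring

lemma expect_le_of_le (p : FinDist Ω) {g : Ω → ℝ} {c : ℝ} (h : ∀ ω, g ω ≤ c) :
    p.expect g ≤ c :=
  (p.expect_mono h).trans_eq (p.expect_const c)

lemma le_expect_of_le (p : FinDist Ω) {g : Ω → ℝ} {c : ℝ} (h : ∀ ω, c ≤ g ω) :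
    c ≤ p.expect g :=
  (p.expect_const c).symm.trans_le (p.expect_mono h)

lemma probEvent_nonneg (p : FinDist Ω) (E : Ω → Prop) : 0 ≤ p.probEvent E := by
  rw [probEvent_eq_expect]
  exact p.le_expect_of_le fun ω => by split_ifs <;> norm_num

lemma probEvent_le_one (p : FinDist Ω) (E : Ω → Prop) : p.probEvent E ≤ 1 := by
  rw [probEvent_eq_expect]
  exact p.expect_le_of_le fun ω => by split_ifs <;> norm_num

lemma expect_prod (p : FinDist Ω) (q : FinDist Ω') (g : Ω × Ω' → ℝ) :
    (p.prod q).expect g = p.expect fun ω => q.expect fun ω' => g (ω, ω') := by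
  simp only [expect, prod, Fintype.sum_prod_type, Finset.mul_sum, mul_assoc]

lemma expect_comm (p : FinDist Ω) (q : FinDist Ω') (g : Ω → Ω' → ℝ) :
    (p.expect fun ω => q.expect (g ω)) = q.expect fun ω' => p.expect fun ω => g ω ω' := by
  simp only [expect, Finset.mul_sum]
  rw [Finset.sum_comm]
  exact Finset.sum_congr rfl fun _ _ => Finset.sum_congr rfl fun _ _ => by ring

lemma probEvent_le_expect (p : FinDist Ω) {E : Ω → Prop} {g : Ω → ℝ} (hg : ∀ ω, 0 ≤ g ω)
    (hE : ∀ ω, E ω → 1 ≤ g ω) : p.probEvent E ≤ p.expect g := by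
  rw [probEvent_eq_expect]
  exact p.expect_mono fun ω => by split_ifs with h; exacts [hE ω h, hg ω]

lemma probEvent_exists_le_sum {K : Type} [Fintype K] (p : FinDist Ω) (E : K → Ω → Prop) :
    p.probEvent (fun ω => ∃ k, E k ω) ≤ ∑ k, p.probEvent (E k) := by
  simp only [probEvent]
  rw [Finset.sum_comm]
  refine Finset.sum_le_sum fun ω _ => ?_
  have hterm : ∀ k, 0 ≤ if E k ω then p.prob ω else 0 := fun k => by
    split_ifs <;> simp [p.nonneg ω]
  split_ifs with h
  · obtain ⟨k, hk⟩ := h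
    simpa [hk] using Finset.single_le_sum (fun k _ => hterm k) (Finset.mem_univ k)
  · exact Finset.sum_nonneg fun k _ => hterm k

lemma exists_not_of_probEvent_lt_one (p : FinDist Ω) {E : Ω → Prop} (h : p.probEvent E < 1) :
    ∃ ω, ¬E ω := by
  by_contra! hall
  simp [probEvent, hall, p.sum_one] at h

noncomputable def uniform (t : ℕ) [NeZero t] : FinDist (Fin t) where
  prob _ := (t : ℝ)⁻¹
  nonneg _ := by positivity
  sum_one := by simp

lemma expect_uniform (t : ℕ) [NeZero t] (g : Fin t → ℝ) :
    (uniform t).expect g = (t : ℝ)⁻¹ * ∑ i, g i := by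
  simp only [expect, uniform, Finset.mul_sum]

def pi (q : FinDist A) (t : ℕ) : FinDist (Fin t → A) where
  prob w := ∏ i, q.prob (w i)
  nonneg _ := Finset.prod_nonneg fun _ _ => q.nonneg _
  sum_one := by
    rw [← Fintype.prod_sum fun (_ : Fin t) => q.prob]
    simp [q.sum_one]

lemma expect_pi_prod (q : FinDist A) (t : ℕ) (g : A → ℝ) :
    (q.pi t).expect (fun w => ∏ i, g (w i)) = q.expect g ^ t := by
  simp only [expect, pi, ← Finset.prod_mul_distrib]
  rw [← Fintype.prod_sum fun (_ : Fin t) a => q.prob a * g a]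
  simp

noncomputable def toPMF (p : FinDist Ω) : PMF Ω :=
  PMF.ofFintype (fun ω => ENNReal.ofReal (p.prob ω)) <| by
    rw [← ENNReal.ofReal_sum_of_nonneg fun ω _ => p.nonneg ω, p.sum_one, ENNReal.ofReal_one]

lemma integral_toMeasure [MeasurableSpace Ω] [MeasurableSingletonClass Ω] (p : FinDist Ω)
    (g : Ω → ℝ) : ∫ ω, g ω ∂p.toPMF.toMeasure = p.expect g := by
  simp [PMF.integral_eq_sum, toPMF, expect, ENNReal.toReal_ofReal (p.nonneg _)]

lemma expect_exp_mul_sub_expect_le (q : FinDist A) {h : A → ℝ} (h0 : ∀ a, 0 ≤ h a)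
    (h1 : ∀ a, h a ≤ 1) (l : ℝ) :
    q.expect (fun a => exp (l * (h a - q.expect h))) ≤ exp (l ^ 2 / 8) := by
  let _ : MeasurableSpace A := ⊤
  have hoeffding := (ProbabilityTheory.hasSubgaussianMGF_of_mem_Icc (μ := q.toPMF.toMeasure)
    (a := 0) (b := 1) Measurable.of_discrete.aemeasurable
    (MeasureTheory.ae_of_all _ fun a => ⟨h0 a, h1 a⟩)).mgf_le l
  simp only [ProbabilityTheory.mgf, integral_toMeasure] at hoeffding
  convert hoeffding using 2
  norm_num
  ring

lemma probEvent_pi_expect_gt_le (q : FinDist A) {h : A → ℝ} (h0 : ∀ a, 0 ≤ h a)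
    (h1 : ∀ a, h a ≤ 1) (t : ℕ) [NeZero t] {d : ℝ} (hd : 0 ≤ d) :
    (q.pi t).probEvent (fun w => q.expect h + d < (uniform t).expect fun i => h (w i)) ≤
      exp (-(2 * t * d ^ 2)) := by
  set μ := q.expect h
  have ht : (0 : ℝ) < t := by exact_mod_cast Nat.pos_of_neZero t
  -- Chernoff bound with `λ = 4d`, the minimiser of `-λtd + tλ²/8`.
  have hchernoff : ∀ w : Fin t → A, μ + d < (uniform t).expect (fun i => h (w i)) →
      1 ≤ exp (-(4 * d * (t * d))) * ∏ i, exp (4 * d * (h (w i) - μ)) := by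
    intro w hw
    rw [expect_uniform, lt_inv_mul_iff₀ ht] at hw
    rw [← exp_sum, ← exp_add, one_le_exp_iff, ← Finset.mul_sum, Finset.sum_sub_distrib,
      Finset.sum_const, Finset.card_univ, Fintype.card_fin, nsmul_eq_mul]
    nlinarith
  calc _ ≤ (q.pi t).expect fun w =>
          exp (-(4 * d * (t * d))) * ∏ i, exp (4 * d * (h (w i) - μ)) :=
        probEvent_le_expect _ (fun w => by positivity) hchernoff
    _ = exp (-(4 * d * (t * d))) * q.expect (fun a => exp (4 * d * (h a - μ))) ^ t := by
        rw [expect_const_mul, expect_pi_prod q t fun a => exp (4 * d * (h a - μ))]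
    _ ≤ exp (-(4 * d * (t * d))) * exp ((4 * d) ^ 2 / 8) ^ t := by
        gcongr
        · exact q.le_expect_of_le fun a => (exp_pos _).le
        · exact q.expect_exp_mul_sub_expect_le h0 h1 _
    _ = exp (-(2 * t * d ^ 2)) := by
        rw [← exp_nat_mul, ← exp_add]
        ring_nf

lemma exists_forall_expect_uniform_le {K : Type} [Fintype K] (q : FinDist A) (h : K → A → ℝ)
    (h0 : ∀ k a, 0 ≤ h k a) (h1 : ∀ k a, h k a ≤ 1) (t : ℕ) [NeZero t] {d : ℝ}
    (hd : 0 ≤ d) (hK : Fintype.card K * exp (-(2 * t * d ^ 2)) < 1) :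
    ∃ w : Fin t → A, ∀ k, ((uniform t).expect fun i => h k (w i)) ≤ q.expect (h k) + d := by
  suffices hbad : (q.pi t).probEvent
      (fun w => ∃ k, q.expect (h k) + d < (uniform t).expect fun i => h k (w i)) < 1 by
    simpa using (q.pi t).exists_not_of_probEvent_lt_one hbad
  calc _ ≤ ∑ k, (q.pi t).probEvent
          (fun w => q.expect (h k) + d < (uniform t).expect fun i => h k (w i)) :=
        probEvent_exists_le_sum _ _
    _ ≤ ∑ _k : K, exp (-(2 * t * d ^ 2)) :=
        Finset.sum_le_sum fun k _ => q.probEvent_pi_expect_gt_le (h0 k) (h1 k) t hd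
    _ < 1 := by simpa using hK

end FinDist

lemma exists_lt_two_pow_le_logb_add_one {T : ℝ} (hT : 0 ≤ T) :
    ∃ m : ℕ, T < 2 ^ m ∧ (m : ℝ) ≤ logb 2 (T + 1) + 1 := by
  have hlog : 0 ≤ logb 2 (T + 1) := logb_nonneg one_lt_two (by linarith)
  refine ⟨⌈logb 2 (T + 1)⌉₊, ?_, (Nat.ceil_lt_add_one hlog).le⟩
  have h := (logb_le_iff_le_rpow one_lt_two (by linarith)).1 (Nat.le_ceil (logb 2 (T + 1)))
  rw [rpow_natCast] at h
  linarith

lemma card_mul_exp_lt_one {N : ℕ} (hN : 0 < N) {δ t : ℝ} (hδ : 0 < δ)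
    (ht : 2 * log N / δ ^ 2 < t) : N * exp (-(2 * t * (δ / 2) ^ 2)) < 1 := by
  rw [div_lt_iff₀ (by positivity)] at ht
  rw [← exp_log (Nat.cast_pos.2 hN : (0 : ℝ) < N), ← exp_add, exp_lt_one_iff]
  linarith

lemma g2_logb {a b : ℝ} (ha : 0 < a) (hb : 0 < b) (δ : ℝ) :
    g2 (logb 2 a) (logb 2 b) δ = 2 * logb 2 (2 * log (a * b) / δ ^ 2 + 1) + 2 := by
  have hlog2 : log 2 ≠ 0 := (log_pos one_lt_two).ne'
  simp only [g2, log2e, logb, log_exp, log_mul ha.ne' hb.ne']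
  field_simp

lemma ceil_logb_card_prod_fin_two_pow (M : Type) [Fintype M] [Nonempty M] (m : ℕ) :
    ⌈logb 2 (Fintype.card (M × Fin (2 ^ m)))⌉ = ⌈logb 2 (Fintype.card M)⌉ + m := by
  rw [Fintype.card_prod, Fintype.card_fin, Nat.cast_mul, Nat.cast_pow, Nat.cast_ofNat,
    logb_mul (by positivity) (by positivity), logb_pow, logb_self_eq_one one_lt_two, mul_one,
    Int.ceil_add_natCast]

namespace ShSMP

open FinDist

variable {X Y Z : Type} [Fintype X] [Fintype Y] [Fintype Z]
  (P : ShSMP X Y Z) (f : X → Y → Z)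

noncomputable def errWith (x : X) (y : Y) (a : P.RAC) (b : P.RBC) : ℝ :=
  (P.dRA.prod (P.dRB.prod P.dRC)).probEvent
    fun r => P.pC (P.pA x r.1 a) (P.pB y r.2.1 b) r.2.2 a b ≠ f x y

lemma errWith_nonneg (x : X) (y : Y) (a : P.RAC) (b : P.RBC) : 0 ≤ P.errWith f x y a b :=
  probEvent_nonneg _ _

lemma errWith_le_one (x : X) (y : Y) (a : P.RAC) (b : P.RBC) : P.errWith f x y a b ≤ 1 :=
  probEvent_le_one _ _

lemma err_eq_expect_errWith (x : X) (y : Y) :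
    P.err f x y = P.dRAC.expect fun a => P.dRBC.expect fun b => P.errWith f x y a b := by
  simp only [err, errWith, randDist, probEvent_eq_expect, expect_prod,
    expect_comm P.dRC P.dRAC, expect_comm P.dRB P.dRAC, expect_comm P.dRA P.dRAC,
    expect_comm P.dRC P.dRBC, expect_comm P.dRB P.dRBC, expect_comm P.dRA P.dRBC]

noncomputable def toPriv {t : ℕ} [NeZero t] (u : Fin t → P.RAC) (v : Fin t → P.RBC) :
    PrivSMP X Y Z where
  MA := P.MA × Fin t
  MB := P.MB × Fin t
  RA := P.RA × Fin t
  RB := P.RB × Fin t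
  RC := P.RC
  dRA := P.dRA.prod (uniform t)
  dRB := P.dRB.prod (uniform t)
  dRC := P.dRC
  pA x r := (P.pA x r.1 (u r.2), r.2)
  pB y r := (P.pB y r.1 (v r.2), r.2)
  pC m m' rc := P.pC m.1 m'.1 rc (u m.2) (v m'.2)

lemma toPriv_err {t : ℕ} [NeZero t] (u : Fin t → P.RAC) (v : Fin t → P.RBC) (x : X) (y : Y) :
    (P.toPriv u v).err f x y =
      (uniform t).expect fun i => (uniform t).expect fun j => P.errWith f x y (u i) (v j) := by
  dsimp only [PrivSMP.err, PrivSMP.randDist, toPriv]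
  simp only [errWith, probEvent_eq_expect, expect_prod,
    expect_comm P.dRA (uniform t), expect_comm P.dRB (uniform t)]

theorem exists_toPriv_computes {ε d : ℝ} (hP : P.Computes f ε) (hd : 0 ≤ d)
    (t : ℕ) [NeZero t]
    (ht : Fintype.card (X × Y) * exp (-(2 * t * d ^ 2)) < 1) :
    ∃ (u : Fin t → P.RAC) (v : Fin t → P.RBC), (P.toPriv u v).Computes f (ε + d + d) := by
  obtain ⟨u, hu⟩ := P.dRAC.exists_forall_expect_uniform_le
    (fun k a => P.dRBC.expect fun b => P.errWith f k.1 k.2 a b)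
    (fun _ _ => le_expect_of_le _ fun _ => P.errWith_nonneg f _ _ _ _)
    (fun _ _ => expect_le_of_le _ fun _ => P.errWith_le_one f _ _ _ _) t hd ht
  obtain ⟨v, hv⟩ := P.dRBC.exists_forall_expect_uniform_le
    (fun k b => (uniform t).expect fun i => P.errWith f k.1 k.2 (u i) b)
    (fun _ _ => le_expect_of_le _ fun _ => P.errWith_nonneg f _ _ _ _)
    (fun _ _ => expect_le_of_le _ fun _ => P.errWith_le_one f _ _ _ _) t hd ht
  refine ⟨u, v, fun x y => ?_⟩
  calc (P.toPriv u v).err f x y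
      = (uniform t).expect fun j => (uniform t).expect fun i => P.errWith f x y (u i) (v j) := by
        rw [toPriv_err, expect_comm]
    _ ≤ (P.dRBC.expect fun b => (uniform t).expect fun i => P.errWith f x y (u i) b) + d :=
        hv (x, y)
    _ = ((uniform t).expect fun i => P.dRBC.expect fun b => P.errWith f x y (u i) b) + d := by
        rw [expect_comm]
    _ ≤ P.err f x y + d + d := by
        rw [err_eq_expect_errWith]
        gcongr
        exact hu (x, y)
    _ ≤ ε + d + d := by linarith [hP x y]

lemma toPriv_CC {m : ℕ} (u : Fin (2 ^ m) → P.RAC) (v : Fin (2 ^ m) → P.RBC) :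
    (P.toPriv u v).CC = P.CC + 2 * m := by
  dsimp only [PrivSMP.CC, CC, toPriv]
  rw [ceil_logb_card_prod_fin_two_pow, ceil_logb_card_prod_fin_two_pow]
  push_cast
  ring

theorem exists_privSMP_computes_CC_le [Nonempty X] [Nonempty Y] {ε δ : ℝ} (hδ : 0 < δ)
    (hP : P.Computes f ε) :
    ∃ P' : PrivSMP X Y Z, P'.Computes f (ε + δ) ∧
      P'.CC ≤ P.CC + g2 (logb 2 (Fintype.card X)) (logb 2 (Fintype.card Y)) δ := by
  have hcard : 0 < Fintype.card (X × Y) := Fintype.card_pos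
  obtain ⟨m, hTm, hm⟩ := exists_lt_two_pow_le_logb_add_one
    (T := 2 * log (Fintype.card (X × Y)) / δ ^ 2) (by positivity)
  obtain ⟨u, v, hcomp⟩ := P.exists_toPriv_computes f hP (d := δ / 2) (by positivity) (2 ^ m)
    (by exact_mod_cast card_mul_exp_lt_one hcard hδ hTm)
  refine ⟨P.toPriv u v, by simpa [add_assoc] using hcomp, ?_⟩
  rw [toPriv_CC, g2_logb (by exact_mod_cast Fintype.card_pos) (by exact_mod_cast Fintype.card_pos)]
  rw [Fintype.card_prod, Nat.cast_mul] at hm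
  linarith

noncomputable def sendInputs [Nonempty X] [Nonempty Y] : ShSMP X Y Z where
  MA := X
  MB := Y
  RA := Fin 1
  RB := Fin 1
  RC := Fin 1
  RAC := Fin 1
  RBC := Fin 1
  dRA := uniform 1
  dRB := uniform 1
  dRC := uniform 1
  dRAC := uniform 1
  dRBC := uniform 1
  pA x _ _ := x
  pB y _ _ := y
  pC x y _ _ _ := f x y

lemma sendInputs_computes [Nonempty X] [Nonempty Y] {ε : ℝ} (hε : 0 ≤ ε) :
    (sendInputs f).Computes f ε := fun x y => by
  simpa [err, sendInputs, FinDist.probEvent] using hε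

end ShSMP

lemma PrivSMP.CC_nonneg {X Y Z : Type} [Fintype X] [Fintype Y] [Fintype Z]
    (P : PrivSMP X Y Z) : 0 ≤ P.CC := by
  have h (M : Type) [Fintype M] [Nonempty M] : (0 : ℝ) ≤ ⌈logb 2 (Fintype.card M)⌉ := by
    exact_mod_cast Int.ceil_nonneg (logb_nonneg one_lt_two (by exact_mod_cast Fintype.card_pos))
  exact add_nonneg (h P.MA) (h P.MB)

lemma CCprivf_le_CCshf_add {X Y Z : Type} [Fintype X] [Fintype Y] [Fintype Z]
    {f : X → Y → Z} {ε ε' c : ℝ}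
    (hreduce : ∀ P : ShSMP X Y Z, P.Computes f ε →
      ∃ P' : PrivSMP X Y Z, P'.Computes f ε' ∧ P'.CC ≤ P.CC + c)
    (hsh : ∃ P : ShSMP X Y Z, P.Computes f ε) :
    CCprivf f ε' ≤ CCshf f ε + c := by
  rw [← sub_le_iff_le_add]
  obtain ⟨P₀, hP₀⟩ := hsh
  refine le_csInf ⟨_, P₀, hP₀, rfl⟩ ?_
  rintro _ ⟨P, hP, rfl⟩
  obtain ⟨P', hP', hCC⟩ := hreduce P hP
  have hbdd : BddBelow {c : ℝ | ∃ Q : PrivSMP X Y Z, Q.Computes f ε' ∧ Q.CC = c} :=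
    ⟨0, by rintro _ ⟨Q, -, rfl⟩; exact Q.CC_nonneg⟩
  rw [sub_le_iff_le_add]
  exact (csInf_le hbdd ⟨P', hP', rfl⟩).trans hCC

theorem sh_to_priv_general (X Y : Type) [Fintype X] [Fintype Y] [Nonempty X] [Nonempty Y]
    (f : X → Y → Bool) (ε δ : ℝ) (hε : 0 ≤ ε) (hδ : 0 < δ) :
    (∀ P : ShSMP X Y Bool, P.Computes f ε →
      ∃ P' : PrivSMP X Y Bool, P'.Computes f (ε + δ) ∧
        P'.CC ≤ P.CC + g2 (Real.logb 2 (Fintype.card X)) (Real.logb 2 (Fintype.card Y)) δ) ∧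
    CCprivf f (ε + δ) ≤ CCshf f ε
      + g2 (Real.logb 2 (Fintype.card X)) (Real.logb 2 (Fintype.card Y)) δ := by
  have hreduce := fun (P : ShSMP X Y Bool) (hP : P.Computes f ε) =>
    P.exists_privSMP_computes_CC_le f hδ hP
  exact ⟨hreduce, CCprivf_le_CCshf_add hreduce ⟨_, ShSMP.sendInputs_computes f hε⟩⟩

/-- Newman-type reduction from shared randomness to private coins in
the SMP model. -/
theorem sh_to_priv (X Y : Type) [Fintype X] [Fintype Y] [Nonempty X] [Nonempty Y]
    (f : X → Y → Bool) (ε δ : ℝ) (hε : 0 ≤ ε) (hδ : 0 < δ) (hsum : ε + δ < 1 / 2) :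
    (∀ P : ShSMP X Y Bool, P.Computes f ε →
      ∃ P' : PrivSMP X Y Bool, P'.Computes f (ε + δ) ∧
        P'.CC ≤ P.CC + g2 (Real.logb 2 (Fintype.card X)) (Real.logb 2 (Fintype.card Y)) δ) ∧
    CCprivf f (ε + δ) ≤ CCshf f ε
      + g2 (Real.logb 2 (Fintype.card X)) (Real.logb 2 (Fintype.card Y)) δ :=
  sh_to_priv_general X Y f ε δ hε hδ
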